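/- Assume (H1). Then: (a) there exists t₁ > 0 such that f(t) = h(t)·exp(t^p) is increasing for all t ≥ t₁; (b) lim_{t→∞} (log h(t))/t^p = 0; (c) for every constant A > 0 and every sequence (ξ_n) of positive reals with ξ_n → ∞, one has lim_{n→∞} max_{ξ ∈ [ξ_n − A/ξ_n^{p−1}, ξ_n + A/ξ_n^{p−1}]} |h(ξ)/h(ξ_n) − 1| = 0. -/

import Mathlib

set_option maxHeartbeats 1000000


open Filter

/-- Lemma 2.1 of the paper. Assume (H0) and (H1) for `h` and
`f t = h t * exp (t ^ p)`. Then (a) `f` is (strictly) increasing on some ray `[t₁, ∞)`;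
(b) `log (h t) / t ^ p → 0` as `t → ∞`; (c) for every `A > 0` and every sequence
`ξ n → ∞` of positive reals, the maximum of `|h ξ / h (ξ n) - 1|` over
`ξ ∈ [ξ n - A / ξ n ^ (p-1), ξ n + A / ξ n ^ (p-1)]` tends to `0`. -/
theorem statement0
    (p : ℝ) (hp : 0 < p)
    (h : ℝ → ℝ)
    (hhC1 : ContDiffOn ℝ 1 h (Set.Ici 0))
    (hhnonneg : ∀ t : ℝ, 0 ≤ t → 0 ≤ h t)
    (t₀ : ℝ) (ht₀ : 0 < t₀) (hhpos : ∀ t : ℝ, t₀ ≤ t → 0 < h t)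
    (f : ℝ → ℝ) (hf : ∀ t : ℝ, f t = h t * Real.exp (t ^ p))
    (H1 : Tendsto (fun t : ℝ => deriv h t / (t ^ (p - 1) * h t)) atTop (nhds 0)) :
    (∃ t₁ : ℝ, 0 < t₁ ∧ StrictMonoOn f (Set.Ici t₁)) ∧
    Tendsto (fun t : ℝ => Real.log (h t) / t ^ p) atTop (nhds 0) ∧
    (∀ A : ℝ, 0 < A → ∀ ξ : ℕ → ℝ, (∀ n, 0 < ξ n) →
      Tendsto ξ atTop atTop →
      ∀ ε : ℝ, 0 < ε → ∀ᶠ n in atTop,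
        ∀ x ∈ Set.Icc (ξ n - A / (ξ n) ^ (p - 1)) (ξ n + A / (ξ n) ^ (p - 1)),
          |h x / h (ξ n) - 1| ≤ ε) := by
  have hfe : f = fun t => h t * Real.exp (t ^ p) := funext hf
  subst hfe
  -- h has a derivative at every positive point
  have hderiv : ∀ t : ℝ, 0 < t → HasDerivAt h (deriv h t) t := by
    intro t ht
    have h1 : DifferentiableOn ℝ h (Set.Ici 0) := hhC1.differentiableOn one_ne_zero
    exact ((h1 t ht.le).differentiableAt (Ici_mem_nhds ht)).hasDerivAt
  have hglog : ∀ t : ℝ, t₀ ≤ t → HasDerivAt (fun s => Real.log (h s))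
      (deriv h t / h t) t := by
    intro t ht
    exact (hderiv t (lt_of_lt_of_le ht₀ ht)).log (hhpos t ht).ne'
  -- quantitative form of (H1)
  have key : ∀ ε : ℝ, 0 < ε → ∃ T : ℝ, t₀ ≤ T ∧ 1 ≤ T ∧
      ∀ t : ℝ, T ≤ t → |deriv h t / h t| ≤ ε * t ^ (p - 1) := by
    intro ε hε
    have h1 := Metric.tendsto_nhds.mp H1 ε hε
    simp only [Real.dist_eq, sub_zero] at h1
    obtain ⟨T, hT⟩ := eventually_atTop.mp h1
    refine ⟨max T (max t₀ 1), le_trans (le_max_left _ _) (le_max_right _ _),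
      le_trans (le_max_right _ _) (le_max_right _ _), ?_⟩
    intro t ht
    have ht1 : (1:ℝ) ≤ t := le_trans (le_trans (le_max_right _ _) (le_max_right _ _)) ht
    have ht0 : (0:ℝ) < t := lt_of_lt_of_le one_pos ht1
    have htt₀ : t₀ ≤ t := le_trans (le_trans (le_max_left _ _) (le_max_right _ _)) ht
    have hH : 0 < h t := hhpos t htt₀
    have hP : 0 < t ^ (p - 1) := Real.rpow_pos_of_pos ht0 _
    have h2 := hT t (le_trans (le_max_left _ _) ht)
    rw [abs_div, abs_of_pos (mul_pos hP hH)] at h2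
    have h3 : |deriv h t| < ε * (t ^ (p - 1) * h t) := (div_lt_iff₀ (mul_pos hP hH)).mp h2
    rw [abs_div, abs_of_pos hH]
    rw [div_le_iff₀ hH]
    nlinarith [abs_nonneg (deriv h t)]
  obtain ⟨T₁, hT₁t₀, hT₁1, hT₁⟩ := key (p / 2) (by positivity)
  have hT₁0 : (0:ℝ) < T₁ := lt_of_lt_of_le one_pos hT₁1
  refine ⟨⟨T₁, hT₁0, ?_⟩, ?_, ?_⟩
  -- part (a)
  · have hfd : ∀ t : ℝ, 0 < t → HasDerivAt (fun t => h t * Real.exp (t ^ p))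
        (deriv h t * Real.exp (t ^ p) + h t * (Real.exp (t ^ p) * (p * t ^ (p - 1)))) t := by
      intro t ht
      exact (hderiv t ht).mul ((Real.hasDerivAt_rpow_const (Or.inl ht.ne')).exp)
    apply strictMonoOn_of_deriv_pos (convex_Ici T₁)
    · intro t ht
      exact (hfd t (lt_of_lt_of_le hT₁0 ht)).continuousAt.continuousWithinAt
    · intro t ht
      rw [interior_Ici] at ht
      have ht0 : 0 < t := lt_trans hT₁0 ht
      rw [(hfd t ht0).deriv]
      have hH : 0 < h t := hhpos t (le_trans hT₁t₀ ht.le)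
      have hP : 0 < t ^ (p - 1) := Real.rpow_pos_of_pos ht0 _
      have hE : 0 < Real.exp (t ^ p) := Real.exp_pos _
      have hb := hT₁ t ht.le
      have h3 : -(p / 2 * t ^ (p - 1)) ≤ deriv h t / h t := (abs_le.mp hb).1
      have h4 : -(p / 2 * t ^ (p - 1)) * h t ≤ deriv h t := (le_div_iff₀ hH).mp h3
      nlinarith [mul_le_mul_of_nonneg_right h4 hE.le,
        mul_pos (mul_pos hp hP) (mul_pos hH hE)]
  -- part (b)
  · rw [NormedAddCommGroup.tendsto_nhds_zero]
    intro ε hε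
    obtain ⟨T, hTt₀, hT1, hT⟩ := key (ε / 2 * p) (by positivity)
    have hT0 : (0:ℝ) < T := lt_of_lt_of_le one_pos hT1
    have hmono : ∀ c : ℝ, c = 1 ∨ c = -1 →
        MonotoneOn (fun t => ε / 2 * t ^ p + c * Real.log (h t)) (Set.Ici T) := by
      intro c hc
      have hd : ∀ t : ℝ, T ≤ t → HasDerivAt (fun t => ε / 2 * t ^ p + c * Real.log (h t))
          (ε / 2 * (p * t ^ (p - 1)) + c * (deriv h t / h t)) t := by
        intro t ht
        have ht0 : 0 < t := lt_of_lt_of_le hT0 ht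
        exact ((Real.hasDerivAt_rpow_const (p := p) (Or.inl ht0.ne')).const_mul (ε/2)).add
          ((hglog t (le_trans hTt₀ ht)).const_mul c)
      apply monotoneOn_of_deriv_nonneg (convex_Ici T)
      · intro t ht
        exact (hd t ht).continuousAt.continuousWithinAt
      · intro t ht
        rw [interior_Ici] at ht
        exact (hd t ht.le).differentiableAt.differentiableWithinAt
      · intro t ht
        rw [interior_Ici] at ht
        rw [(hd t ht.le).deriv]
        have hb := hT t ht.le
        have h1 := (abs_le.mp hb).1
        have h2 := (abs_le.mp hb).2
        rcases hc with rfl | rfl <;> nlinarith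
    have e1 : ∀ᶠ t : ℝ in atTop, T ≤ t := eventually_ge_atTop T
    have e2 : ∀ᶠ t : ℝ in atTop,
        2 * |Real.log (h T)| / ε + 1 ≤ t ^ p :=
      (tendsto_rpow_atTop hp).eventually_ge_atTop _
    filter_upwards [e1, e2] with t ht h6
    have ht0 : 0 < t := lt_of_lt_of_le hT0 ht
    have htp : 0 < t ^ p := Real.rpow_pos_of_pos ht0 _
    have hTp : 0 < T ^ p := Real.rpow_pos_of_pos hT0 _
    have hub := hmono 1 (Or.inl rfl) (Set.self_mem_Ici) (show t ∈ Set.Ici T from ht) ht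
    have hlb := hmono (-1) (Or.inr rfl) (Set.self_mem_Ici) (show t ∈ Set.Ici T from ht) ht
    simp only [one_mul, neg_one_mul] at hub hlb
    have habs : |Real.log (h t)| ≤ |Real.log (h T)| + ε / 2 * t ^ p := by
      rw [abs_le]
      constructor
      · nlinarith [neg_abs_le (Real.log (h T))]
      · nlinarith [le_abs_self (Real.log (h T))]
    have h7 : 2 * |Real.log (h T)| ≤ (t ^ p - 1) * ε :=
      (div_le_iff₀ hε).mp (by linarith : 2 * |Real.log (h T)| / ε ≤ t ^ p - 1)
    rw [Real.norm_eq_abs, abs_div, abs_of_pos htp, div_lt_iff₀ htp]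
    nlinarith [abs_nonneg (Real.log (h T))]
  -- part (c)
  · intro A hA ξ hξpos hξ ε hε
    set δ := Real.log (1 + ε) with hδdef
    have hδ : 0 < δ := Real.log_pos (by linarith)
    set K := (2:ℝ) ^ (p - 1) + ((2:ℝ) ^ (p - 1))⁻¹ with hKdef
    have h2P : (0:ℝ) < (2:ℝ) ^ (p - 1) := Real.rpow_pos_of_pos two_pos _
    have hK : 0 < K := by positivity
    set ε₁ := δ / (K * A) with hε₁def
    have hε₁ : 0 < ε₁ := by positivity
    obtain ⟨T, hTt₀, hT1, hT⟩ := key ε₁ hε₁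
    have hT0 : (0:ℝ) < T := lt_of_lt_of_le one_pos hT1
    have e1 : ∀ᶠ n in atTop, 2 * T ≤ ξ n := hξ.eventually_ge_atTop _
    have e2 : ∀ᶠ n in atTop, 2 * A ≤ ξ n ^ p :=
      ((tendsto_rpow_atTop hp).comp hξ).eventually_ge_atTop _
    filter_upwards [e1, e2] with n h1 h2
    intro x hx
    set c := ξ n with hcdef
    have hc0 : 0 < c := hξpos n
    have hct₀ : t₀ ≤ c := by linarith [hTt₀, hT1, h1]
    have hPn : 0 < c ^ (p - 1) := Real.rpow_pos_of_pos hc0 _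
    have hPp : 0 < c ^ p := Real.rpow_pos_of_pos hc0 _
    have hre : c ^ (p - 1) * c = c ^ p := by
      rw [Real.rpow_sub_one hc0.ne']; field_simp
    set r := A / c ^ (p - 1) with hrdef
    have hr : 0 < r := by positivity
    have hrle : r ≤ c / 2 := by
      rw [hrdef, div_le_div_iff₀ hPn two_pos]
      nlinarith
    -- membership facts
    have hxl : c - r ≤ x := hx.1
    have hxu : x ≤ c + r := hx.2
    have hxhalf : c / 2 ≤ x := by linarith
    have hx2c : x ≤ 2 * c := by linarith
    have hhalfT : T ≤ c / 2 := by linarith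
    -- the derivative bound on the interval
    have hbound : ∀ y ∈ Set.Icc (c - r) (c + r),
        |deriv h y / h y| ≤ ε₁ * (K * c ^ (p - 1)) := by
      intro y hy
      have hyhalf : c / 2 ≤ y := by
        have := hy.1; linarith
      have hy2c : y ≤ 2 * c := by
        have := hy.2; linarith
      have hy0 : 0 < y := lt_of_lt_of_le (by linarith) hyhalf
      have hyT : T ≤ y := le_trans hhalfT hyhalf
      have hstep : y ^ (p - 1) ≤ K * c ^ (p - 1) := by
        rcases le_or_gt 1 p with hp1 | hp1
        · have h3 : y ^ (p - 1) ≤ (2 * c) ^ (p - 1) :=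
            Real.rpow_le_rpow hy0.le hy2c (by linarith)
          have h4 : (2 * c) ^ (p - 1) = (2:ℝ) ^ (p - 1) * c ^ (p - 1) :=
            Real.mul_rpow (by norm_num) hc0.le
          have h5 : 0 < ((2:ℝ) ^ (p - 1))⁻¹ * c ^ (p - 1) := by positivity
          rw [hKdef]; nlinarith
        · have h3 : y ^ (p - 1) ≤ (c / 2) ^ (p - 1) :=
            Real.rpow_le_rpow_of_nonpos (by linarith) hyhalf (by linarith)
          have h4 : (c / 2) ^ (p - 1) = c ^ (p - 1) / (2:ℝ) ^ (p - 1) :=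
            Real.div_rpow hc0.le (by norm_num : (0:ℝ) ≤ 2) (p - 1)
          have h5 : c ^ (p - 1) / (2:ℝ) ^ (p - 1) = ((2:ℝ) ^ (p - 1))⁻¹ * c ^ (p - 1) := by
            field_simp
          have h6 : 0 < (2:ℝ) ^ (p - 1) * c ^ (p - 1) := by positivity
          rw [hKdef]; nlinarith
      calc |deriv h y / h y| ≤ ε₁ * y ^ (p - 1) := hT y hyT
        _ ≤ ε₁ * (K * c ^ (p - 1)) := by nlinarith
    -- mean value inequality on the interval
    have hcmem : c ∈ Set.Icc (c - r) (c + r) := by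
      constructor <;> linarith
    have hmvt := (convex_Icc (c - r) (c + r)).norm_image_sub_le_of_norm_hasDerivWithin_le
      (f := fun s => Real.log (h s)) (f' := fun y => deriv h y / h y)
      (fun y hy => by
        have hyhalf : c / 2 ≤ y := by have := hy.1; linarith
        have hyT : t₀ ≤ y := le_trans (le_trans hTt₀ hhalfT) hyhalf
        exact (hglog y hyT).hasDerivWithinAt)
      (fun y hy => by rw [Real.norm_eq_abs]; exact hbound y hy)
      hcmem hx
    have hdist : ‖x - c‖ ≤ r := by
      rw [Real.norm_eq_abs, abs_le]
      constructor <;> linarith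
    have hCr : ε₁ * (K * c ^ (p - 1)) * r = δ := by
      rw [hε₁def, hrdef]
      field_simp
    have hlog : |Real.log (h x) - Real.log (h c)| ≤ δ := by
      have h7 : ε₁ * (K * c ^ (p - 1)) * ‖x - c‖ ≤ ε₁ * (K * c ^ (p - 1)) * r := by
        apply mul_le_mul_of_nonneg_left hdist
        positivity
      calc |Real.log (h x) - Real.log (h c)|
          ≤ ε₁ * (K * c ^ (p - 1)) * ‖x - c‖ := by
            simpa [Real.norm_eq_abs] using hmvt
        _ ≤ ε₁ * (K * c ^ (p - 1)) * r := h7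
        _ = δ := hCr
    -- finish
    have hxt₀ : t₀ ≤ x := le_trans (le_trans hTt₀ hhalfT) hxhalf
    have hhx : 0 < h x := hhpos x hxt₀
    have hhc : 0 < h c := hhpos c hct₀
    have hratio : h x / h c = Real.exp (Real.log (h x) - Real.log (h c)) := by
      rw [Real.exp_sub, Real.exp_log hhx, Real.exp_log hhc]
    set s := Real.log (h x) - Real.log (h c) with hsdef
    have hs1 : s ≤ δ := (abs_le.mp hlog).2
    have hs2 : -δ ≤ s := (abs_le.mp hlog).1
    have hed : Real.exp δ = 1 + ε := Real.exp_log (by linarith)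
    have hup : Real.exp s ≤ 1 + ε := by
      rw [← hed]; exact Real.exp_le_exp.mpr hs1
    have hlo : (1 + ε)⁻¹ ≤ Real.exp s := by
      rw [← hed, ← Real.exp_neg]
      exact Real.exp_le_exp.mpr hs2
    rw [hratio, abs_le]
    have hinv : 1 - ε ≤ (1 + ε)⁻¹ := by
      rw [inv_eq_one_div, le_div_iff₀ (by linarith : (0:ℝ) < 1 + ε)]
      nlinarith
    constructor
    · linarith
    · linarith
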